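/- arXiv:1307.6527 — 3 statements merged into one kernel-verified Lean document; each statement's English description precedes it below -/
import Mathlib

section
/- For every commutative ring R, elements x, y ∈ R, and natural number n ≥ 1, the identity (x - y)^n · (x + n·y) = x^(n+1) - ∑_{i=1}^{n} (n + 1 - i) · (x - y)^(n-i) · x^(i-1) · y^2 holds. -/
/-! With `a = x - y`, the terms `T i = a ^ (n - i) * x ^ i * (x + (n - i) • y)` interpolate
between `T 0 = a ^ n * (x + n • y)` and `T n = x ^ (n + 1)`, and consecutive terms differ by
exactly the `i`-th summand `(n + 1 - i) • (a ^ (n - i) * x ^ (i - 1) * y ^ 2)`, so the sum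
telescopes. -/

theorem Finset.sum_Icc_one_sub_pred {G : Type*} [AddCommGroup G] (f : ℕ → G) (n : ℕ) :
    ∑ i ∈ Finset.Icc 1 n, (f i - f (i - 1)) = f n - f 0 := by
  rw [← Finset.Ico_add_one_right_eq_Icc, Finset.sum_Ico_eq_sum_range]
  simpa [add_comm 1] using Finset.sum_range_sub f n

theorem sub_pow_mul_pow_succ_mul_add_nsmul_sub {R : Type*} [CommRing R] (x y : R) (m k : ℕ) :
    (x - y) ^ m * x ^ (k + 1) * (x + m • y) - (x - y) ^ (m + 1) * x ^ k * (x + (m + 1) • y) =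
      (m + 1) • ((x - y) ^ m * x ^ k * y ^ 2) := by
  simp only [nsmul_eq_mul]
  push_cast
  ring

theorem stmt_0_general (R : Type*) [CommRing R] (x y : R) (n : ℕ) :
    (x - y) ^ n * (x + n • y) =
      x ^ (n + 1) -
        ∑ i ∈ Finset.Icc 1 n, (n + 1 - i) • ((x - y) ^ (n - i) * x ^ (i - 1) * y ^ 2) := by
  set T : ℕ → R := fun i => (x - y) ^ (n - i) * x ^ i * (x + (n - i) • y)
  have hstep : ∀ i ∈ Finset.Icc 1 n,
      T i - T (i - 1) = (n + 1 - i) • ((x - y) ^ (n - i) * x ^ (i - 1) * y ^ 2) := by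
    intro i hi
    obtain ⟨hi1, hin⟩ := Finset.mem_Icc.mp hi
    have h := sub_pow_mul_pow_succ_mul_add_nsmul_sub x y (n - i) (i - 1)
    rw [Nat.sub_add_cancel hi1] at h
    simp only [T]
    rw [show n + 1 - i = n - i + 1 by omega, show n - (i - 1) = n - i + 1 by omega]
    exact h
  rw [← Finset.sum_congr rfl hstep, Finset.sum_Icc_one_sub_pred]
  simp only [T, Nat.sub_self, Nat.sub_zero, pow_zero, zero_smul, add_zero, one_mul, mul_one]
  ring

theorem stmt_0 (R : Type*) [CommRing R] (x y : R) (n : ℕ) (hn : 1 ≤ n) :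
    (x - y) ^ n * (x + n • y) =
      x ^ (n + 1) -
        ∑ i ∈ Finset.Icc 1 n, (n + 1 - i) • ((x - y) ^ (n - i) * x ^ (i - 1) * y ^ 2) :=
  stmt_0_general R x y n
end

section
/- For every integer s with 0 < s < n, the monomial x^s · y^(n+1-s) can be written as an integer linear combination of the polynomials (x - y)^(n-i) · x^(i-1) · y^2 for 1 ≤ i ≤ n. -/
open MvPolynomial Finset

/-! Writing `y = x - (x - y)` and expanding `y ^ (n - 1 - s)` binomially gives
`x ^ s * y ^ (n - 1 - s) = ∑ j, (-1) ^ j * C(n - 1 - s, j) * (x - y) ^ j * x ^ (n - 1 - j)`;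
multiplying by `y ^ 2` and reindexing by `i = n - 1 - j` gives the claim. -/

theorem pow_eq_sum_smul_sub_pow_mul_pow {R : Type*} [CommRing R] (a b : R) (M : ℕ) :
    b ^ M = ∑ j ∈ range (M + 1),
      ((-1) ^ j * (M.choose j : ℤ)) • ((a - b) ^ j * a ^ (M - j)) := by
  conv_lhs => rw [show b = -(a - b) + a by ring, add_pow]
  refine sum_congr rfl fun j _ => ?_
  rw [zsmul_eq_mul, neg_pow]
  push_cast
  ring

theorem pow_mul_pow_eq_sum_smul_sub_pow_mul_pow {R : Type*} [CommRing R] (a b : R) {n s : ℕ}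
    (hsn : s < n) :
    a ^ s * b ^ (n - 1 - s) = ∑ i ∈ range n,
      ((-1) ^ (n - 1 - i) * ((n - 1 - s).choose (n - 1 - i) : ℤ)) •
        ((a - b) ^ (n - 1 - i) * a ^ i) := by
  set M := n - 1 - s
  calc a ^ s * b ^ M
      = ∑ j ∈ range (M + 1), ((-1) ^ j * (M.choose j : ℤ)) • ((a - b) ^ j * a ^ (n - 1 - j)) := by
        rw [pow_eq_sum_smul_sub_pow_mul_pow a b M, mul_sum]
        refine sum_congr rfl fun j hj => ?_
        rw [mul_smul_comm, mul_left_comm, ← pow_add]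
        congr 4
        rw [mem_range] at hj
        omega
    _ = ∑ j ∈ range n, ((-1) ^ j * (M.choose j : ℤ)) • ((a - b) ^ j * a ^ (n - 1 - j)) := by
        refine sum_subset (range_subset_range.2 (by omega)) fun j _ hj => ?_
        rw [Nat.choose_eq_zero_of_lt (by simpa using hj)]
        simp
    _ = _ := by
        rw [← sum_range_reflect]
        refine sum_congr rfl fun i hi => ?_
        rw [Nat.sub_sub_self (by rw [mem_range] at hi; omega)]

theorem stmt_2_general (n s : ℕ) (hsn : s < n) :
    ∃ c : Fin n → ℤ,
      ((X 0) ^ s * (X 1) ^ (n + 1 - s) : MvPolynomial (Fin 2) ℤ) =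
        ∑ i : Fin n,
          c i • ((X 0 - X 1) ^ (n - 1 - (i : ℕ)) * (X 0) ^ (i : ℕ) * (X 1) ^ 2) := by
  refine ⟨fun i => (-1) ^ (n - 1 - (i : ℕ)) * ((n - 1 - s).choose (n - 1 - (i : ℕ)) : ℤ), ?_⟩
  rw [show n + 1 - s = (n - 1 - s) + 2 by omega, pow_add, ← mul_assoc,
    pow_mul_pow_eq_sum_smul_sub_pow_mul_pow _ _ hsn, sum_mul, ← Fin.sum_univ_eq_sum_range]
  simp only [smul_mul_assoc]

theorem stmt_2 (n s : ℕ) (hn : 2 ≤ n) (hs0 : 0 < s) (hsn : s < n) :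
    ∃ c : Fin n → ℤ,
      ((X 0) ^ s * (X 1) ^ (n + 1 - s) : MvPolynomial (Fin 2) ℤ) =
        ∑ i : Fin n,
          c i • ((X 0 - X 1) ^ (n - 1 - (i : ℕ)) * (X 0) ^ (i : ℕ) * (X 1) ^ 2) :=
  stmt_2_general n s hsn
end

section
/- Let C ⊆ V be an open convex cone in a finite-dimensional real normed vector space V, and let α : C → ℝ be a function satisfying (a) α(t·L) = α(L)/t for all t > 0 and L ∈ C, and (b) α(L) ≤ α(L') whenever L, L' ∈ C and L - L' ∈ C̄ lies in the closure of the cone (antitonicity with respect to the cone order). Suppose α(L) > 0 for all L ∈ C. Then α is continuous on C. -/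
/-!
Near `L`, every `L'` is squeezed in the cone order between `t • L` and `s • L` for any
`s < 1 < t`, because `t • L - L'` and `L' - s • L` tend to the points `(t - 1) • L` and
`(1 - s) • L` of the open cone. Antitonicity and homogeneity then trap `α L'` between
`α L / t` and `α L / s`, and both bounds tend to `α L` as `s, t → 1`.
-/

open Filter Topology

section ConeAntitone

variable {V : Type*} [AddCommGroup V] [Module ℝ V] [TopologicalSpace V] [IsTopologicalAddGroup V]
  {C : Set V} {α : V → ℝ} {L : V}

lemma eventually_smul_sub_mem_of_one_lt (hCopen : IsOpen C)
    (hCcone : ∀ x ∈ C, ∀ t : ℝ, 0 < t → t • x ∈ C) (hL : L ∈ C) {t : ℝ} (ht : 1 < t) :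
    ∀ᶠ L' in 𝓝 L, t • L - L' ∈ C := by
  have hlim : Tendsto (fun L' => t • L - L') (𝓝 L) (𝓝 ((t - 1) • L)) := by
    simpa [sub_smul] using tendsto_const_nhds.sub tendsto_id
  exact hlim.eventually_mem (hCopen.mem_nhds (hCcone L hL _ (sub_pos.2 ht)))

lemma eventually_sub_smul_mem_of_lt_one (hCopen : IsOpen C)
    (hCcone : ∀ x ∈ C, ∀ t : ℝ, 0 < t → t • x ∈ C) (hL : L ∈ C) {t : ℝ} (ht : t < 1) :
    ∀ᶠ L' in 𝓝 L, L' - t • L ∈ C := by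
  have hlim : Tendsto (fun L' => L' - t • L) (𝓝 L) (𝓝 ((1 - t) • L)) := by
    simpa [sub_smul] using tendsto_id.sub tendsto_const_nhds
  exact hlim.eventually_mem (hCopen.mem_nhds (hCcone L hL _ (sub_pos.2 ht)))

lemma eventually_lt_apply_of_lt (hCopen : IsOpen C)
    (hCcone : ∀ x ∈ C, ∀ t : ℝ, 0 < t → t • x ∈ C)
    (hhom : ∀ L ∈ C, ∀ t : ℝ, 0 < t → α (t • L) = α L / t)
    (hanti : ∀ L ∈ C, ∀ L' ∈ C, L - L' ∈ C → α L ≤ α L')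
    (hL : L ∈ C) {a : ℝ} (ha : a < α L) :
    ∀ᶠ L' in 𝓝 L, a < α L' := by
  have hdiv : ∀ᶠ t in 𝓝[>] 1, a < α L / t := by
    have : Tendsto (fun t : ℝ => α L / t) (𝓝[>] 1) (𝓝 (α L / 1)) :=
      (tendsto_const_nhds.div tendsto_id one_ne_zero).mono_left nhdsWithin_le_nhds
    exact this.eventually (lt_mem_nhds (by rwa [div_one]))
  obtain ⟨t, hat, ht⟩ := (hdiv.and self_mem_nhdsWithin).exists
  have ht0 : (0 : ℝ) < t := zero_lt_one.trans ht
  filter_upwards [eventually_smul_sub_mem_of_one_lt hCopen hCcone hL ht, hCopen.mem_nhds hL]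
    with L' hsub hL'
  calc a < α L / t := hat
    _ = α (t • L) := (hhom L hL t ht0).symm
    _ ≤ α L' := hanti _ (hCcone L hL t ht0) L' hL' hsub

lemma eventually_apply_lt_of_lt (hCopen : IsOpen C)
    (hCcone : ∀ x ∈ C, ∀ t : ℝ, 0 < t → t • x ∈ C)
    (hhom : ∀ L ∈ C, ∀ t : ℝ, 0 < t → α (t • L) = α L / t)
    (hanti : ∀ L ∈ C, ∀ L' ∈ C, L - L' ∈ C → α L ≤ α L')
    (hL : L ∈ C) {b : ℝ} (hb : α L < b) :
    ∀ᶠ L' in 𝓝 L, α L' < b := by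
  have hdiv : ∀ᶠ s in 𝓝[<] 1, α L / s < b := by
    have : Tendsto (fun s : ℝ => α L / s) (𝓝[<] 1) (𝓝 (α L / 1)) :=
      (tendsto_const_nhds.div tendsto_id one_ne_zero).mono_left nhdsWithin_le_nhds
    exact this.eventually (gt_mem_nhds (by rwa [div_one]))
  have hpos : ∀ᶠ s in 𝓝[<] (1 : ℝ), 0 < s :=
    (lt_mem_nhds zero_lt_one).filter_mono nhdsWithin_le_nhds
  obtain ⟨s, hsb, hs0, hs⟩ := (hdiv.and (hpos.and self_mem_nhdsWithin)).exists
  filter_upwards [eventually_sub_smul_mem_of_lt_one hCopen hCcone hL hs, hCopen.mem_nhds hL]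
    with L' hsub hL'
  calc α L' ≤ α (s • L) := hanti L' hL' _ (hCcone L hL s hs0) hsub
    _ = α L / s := hhom L hL s hs0
    _ < b := hsb

theorem continuousOn_of_antitone_of_homogeneous (hCopen : IsOpen C)
    (hCcone : ∀ x ∈ C, ∀ t : ℝ, 0 < t → t • x ∈ C)
    (hhom : ∀ L ∈ C, ∀ t : ℝ, 0 < t → α (t • L) = α L / t)
    (hanti : ∀ L ∈ C, ∀ L' ∈ C, L - L' ∈ C → α L ≤ α L') :
    ContinuousOn α C := fun _ hL =>
  ContinuousAt.continuousWithinAt <| tendsto_order.2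
    ⟨fun _ ha => eventually_lt_apply_of_lt hCopen hCcone hhom hanti hL ha,
     fun _ hb => eventually_apply_lt_of_lt hCopen hCcone hhom hanti hL hb⟩

end ConeAntitone

theorem stmt_5_general {V : Type*} [NormedAddCommGroup V] [NormedSpace ℝ V]
    (C : Set V) (hCopen : IsOpen C)
    (hCcone : ∀ x ∈ C, ∀ t : ℝ, 0 < t → t • x ∈ C)
    (α : V → ℝ)
    (hhom : ∀ L ∈ C, ∀ t : ℝ, 0 < t → α (t • L) = α L / t)
    (hanti : ∀ L ∈ C, ∀ L' ∈ C, L - L' ∈ closure C → α L ≤ α L') :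
    ContinuousOn α C :=
  continuousOn_of_antitone_of_homogeneous hCopen hCcone hhom
    fun L hL L' hL' hsub => hanti L hL L' hL' (subset_closure hsub)

theorem stmt_5 {V : Type*} [NormedAddCommGroup V] [NormedSpace ℝ V]
    [FiniteDimensional ℝ V]
    (C : Set V) (hCopen : IsOpen C) (hCconv : Convex ℝ C)
    (hCcone : ∀ x ∈ C, ∀ t : ℝ, 0 < t → t • x ∈ C)
    (α : V → ℝ)
    (hhom : ∀ L ∈ C, ∀ t : ℝ, 0 < t → α (t • L) = α L / t)
    (hanti : ∀ L ∈ C, ∀ L' ∈ C, L - L' ∈ closure C → α L ≤ α L')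
    (hpos : ∀ L ∈ C, 0 < α L) :
    ContinuousOn α C :=
  stmt_5_general C hCopen hCcone α hhom hanti
end
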